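/- arXiv:2107.05718 — 6 statements merged into one kernel-verified Lean document; each statement's English description precedes it below -/
import Mathlib

section
/- In a Grothendieck-Verdier category C with dualising object K and dualising functor D, for every invertible object U the object K ⊗ U⁻¹ is again a dualising object of C. -/
/-!
Tensoring on the right with an invertible `U` is an autoequivalence of `C`, with quasi-inverse
`- ⊗ U⁻¹`, hence adjoint to it. So, naturally in `X`,
`Hom(X ⊗ Y, K ⊗ U⁻¹) ≃ Hom((X ⊗ Y) ⊗ U, K) ≃ Hom(X ⊗ (Y ⊗ U), K) ≃ Hom(X, D (Y ⊗ U))`,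
and `Y ↦ D (Y ⊗ U)` is again an anti-equivalence.
-/

open CategoryTheory MonoidalCategory

namespace CategoryTheory.MonoidalCategory

variable {C : Type*} [Category C] [MonoidalCategory C]

def IsDualising (K : C) : Prop :=
  ∃ D : Cᵒᵖ ⥤ C, D.IsEquivalence ∧
    ∃ d : ∀ X Y : C, (X ⊗ Y ⟶ K) ≃ (X ⟶ D.obj (Opposite.op Y)),
      ∀ (Y : C) {X X' : C} (f : X' ⟶ X) (g : X ⊗ Y ⟶ K),
        d X' Y (f ▷ Y ≫ g) = f ≫ d X Y g

def tensorRightEquivalence {U V : C} (huv : U ⊗ V ≅ 𝟙_ C) (hvu : V ⊗ U ≅ 𝟙_ C) : C ≌ C :=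
  Equivalence.mk (tensorRight U) (tensorRight V)
    ((rightUnitorNatIso C).symm ≪≫ (tensoringRight C).mapIso huv.symm ≪≫ tensorRightTensor U V)
    ((tensorRightTensor V U).symm ≪≫ (tensoringRight C).mapIso hvu ≪≫ rightUnitorNatIso C)

theorem IsDualising.of_adjunction_tensorRight {K U : C} (hK : IsDualising K) {G : C ⥤ C}
    (adj : tensorRight U ⊣ G) [(tensorRight U).IsEquivalence] : IsDualising (G.obj K) := by
  obtain ⟨D, _, d, dnat⟩ := hK
  refine ⟨(tensorRight U).op ⋙ D, inferInstance, fun X Y =>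
    ((adj.homEquiv (X ⊗ Y) K).symm.trans ((α_ X Y U).homCongr (Iso.refl K))).trans
      (d X (Y ⊗ U)), ?_⟩
  intro Y X X' f g
  simp only [Equiv.trans_apply, Adjunction.homEquiv_naturality_left_symm, Iso.homCongr_apply,
    Iso.refl_hom, Category.comp_id, Functor.flip_obj_map, curriedTensor_map_app]
  rw [← associator_inv_naturality_left_assoc, dnat]

end CategoryTheory.MonoidalCategory

/-- In a Grothendieck–Verdier category `C` with dualising object `K`
(dualising functor `Dfun`, an anti-equivalence, representing `Hom(- ⊗ Y, K)` naturally),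
for every invertible object `U` (with inverse `V`) the object `K ⊗ V = K ⊗ U⁻¹` is
again a dualising object of `C`. -/
theorem stmt1 {C : Type*} [Category C] [MonoidalCategory C]
    (K : C) (Dfun : Cᵒᵖ ⥤ C) (hDequiv : Dfun.IsEquivalence)
    (d : ∀ X Y : C, (X ⊗ Y ⟶ K) ≃ (X ⟶ Dfun.obj (Opposite.op Y)))
    (dnat : ∀ (Y : C) {X X' : C} (f : X' ⟶ X) (g : X ⊗ Y ⟶ K),
      d X' Y (f ▷ Y ≫ g) = f ≫ d X Y g)
    (U V : C) (huv : U ⊗ V ≅ 𝟙_ C) (hvu : V ⊗ U ≅ 𝟙_ C) :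
    ∃ D' : Cᵒᵖ ⥤ C, D'.IsEquivalence ∧
      ∃ d' : ∀ X Y : C, (X ⊗ Y ⟶ K ⊗ V) ≃ (X ⟶ D'.obj (Opposite.op Y)),
        ∀ (Y : C) {X X' : C} (f : X' ⟶ X) (g : X ⊗ Y ⟶ K ⊗ V),
          d' X' Y (f ▷ Y ≫ g) = f ≫ d' X Y g := by
  let e := tensorRightEquivalence huv hvu
  have : (tensorRight U).IsEquivalence := e.isEquivalence_functor
  exact IsDualising.of_adjunction_tensorRight ⟨Dfun, hDequiv, d, dnat⟩ e.toAdjunction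
end

section
/- Let h be a finite-dimensional real vector space with a non-degenerate symmetric bilinear form ⟨-,-⟩, let Λ ⊂ h be a discrete subgroup (lattice), let Λ* = {μ ∈ h : ⟨μ, Λ⟩ ⊆ ℤ}, and let Λ⊥ = {μ ∈ h : ⟨μ, Λ⟩ = 0}. Then there exists a finitely generated free abelian subgroup Γ ⊆ Λ* such that Λ* = Λ⊥ ⊕ Γ as an internal direct sum of ℤ-modules. -/
/-!
Choose an ℝ-basis `T ⊆ Λ` of `span ℝ Λ`; it is finite. Pairing with `T` maps `Λ*` into `ℤ^T`,
and a functional vanishing on `T` vanishes on `span ℝ Λ`, so the kernel of this map is `Λ⊥`.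
Its image is a subgroup of `ℤ^T`, hence free of finite rank, so the map splits over its image
and the image of a section is a free complement `Γ` of `Λ⊥` in `Λ*`.
-/

theorem AddMonoidHom.exists_intCast_eq {A ι : Type*} [AddCommGroup A] (g : A →+ (ι → ℝ))
    (hg : ∀ a i, ∃ n : ℤ, g a i = n) : ∃ f : A →+ (ι → ℤ), ∀ a i, (f a i : ℝ) = g a i := by
  choose F hF using hg
  refine ⟨{ toFun := F, map_zero' := ?_, map_add' := fun a b => ?_ },
    fun a i => (hF a i).symm⟩ <;> ext i <;> apply Int.cast_injective (α := ℝ) <;> simp [← hF]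

theorem Submodule.forall_mem_eq_zero_iff_of_span_eq {R V W : Type*} [Semiring R]
    [AddCommMonoid V] [Module R V] [AddCommMonoid W] [Module R W] {s t : Set V} (hts : t ⊆ s)
    (hspan : span R t = span R s) (g : V →ₗ[R] W) :
    (∀ x ∈ t, g x = 0) ↔ ∀ x ∈ s, g x = 0 := by
  refine ⟨fun h x hx => ?_, fun h x hx => h x (hts hx)⟩
  have hxt : x ∈ span R t := hspan ▸ subset_span hx
  exact span_le.2 (fun y hy => LinearMap.mem_ker.2 (h y hy)) hxt

theorem AddSubgroup.exists_free_compl_of_ker_eq {M ι : Type*} [AddCommGroup M] [Finite ι]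
    {K D : AddSubgroup M} (hKD : K ≤ D) (f : D →+ (ι → ℤ))
    (hf : ∀ x : D, f x = 0 ↔ (x : M) ∈ K) :
    ∃ Γ : AddSubgroup M, Γ ≤ D ∧ (∃ n : ℕ, Nonempty (Γ ≃+ (Fin n → ℤ))) ∧
      K ⊓ Γ = ⊥ ∧ K ⊔ Γ = D := by
  let φ := f.toIntLinearMap
  obtain ⟨n, b⟩ := Submodule.basisOfPid (Pi.basisFun ℤ ι) (LinearMap.range φ)
  have := Module.Free.of_basis b
  obtain ⟨σ, hσ⟩ := φ.rangeRestrict.exists_rightInverse_of_surjective φ.range_rangeRestrict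
  have hfσ (y : LinearMap.range φ) : f (σ y) = y :=
    congrArg Subtype.val (LinearMap.congr_fun hσ y)
  let s : LinearMap.range φ →+ M := D.subtype.comp σ.toAddMonoidHom
  have hs : Function.Injective s := fun y z hyz =>
    Subtype.ext <| by rw [← hfσ y, ← hfσ z]; exact congrArg f (Subtype.ext hyz)
  refine ⟨s.range, ?_, ⟨n, ⟨(AddMonoidHom.ofInjective hs).symm.trans b.equivFun.toAddEquiv⟩⟩,
    ?_, ?_⟩
  · rintro _ ⟨y, rfl⟩
    exact (σ y).2
  · rw [AddSubgroup.eq_bot_iff_forall]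
    rintro _ ⟨hK, y, rfl⟩
    have : y = 0 := Subtype.ext <| by rw [← hfσ y, (hf (σ y)).2 hK]; rfl
    simp [this]
  · refine le_antisymm (sup_le hKD ?_) fun μ hμ => ?_
    · rintro _ ⟨y, rfl⟩
      exact (σ y).2
    · have hker : f (⟨μ, hμ⟩ - σ (φ.rangeRestrict ⟨μ, hμ⟩)) = 0 := by
        rw [map_sub, hfσ]; exact sub_self _
      refine AddSubgroup.mem_sup.2 ⟨_, (hf _).1 hker, _, ⟨φ.rangeRestrict ⟨μ, hμ⟩, rfl⟩, ?_⟩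
      simp [s]

theorem stmt2_general {h : Type*} [NormedAddCommGroup h] [NormedSpace ℝ h]
    [FiniteDimensional ℝ h]
    (B : h →ₗ[ℝ] h →ₗ[ℝ] ℝ)
    (Λ dual perp : AddSubgroup h)
    (hdual : ∀ μ, μ ∈ dual ↔ ∀ l ∈ Λ, ∃ n : ℤ, B μ l = (n : ℝ))
    (hperp : ∀ μ, μ ∈ perp ↔ ∀ l ∈ Λ, B μ l = 0) :
    ∃ Γ : AddSubgroup h, Γ ≤ dual ∧
      (∃ n : ℕ, Nonempty (Γ ≃+ (Fin n → ℤ))) ∧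
      perp ⊓ Γ = ⊥ ∧ perp ⊔ Γ = dual := by
  obtain ⟨T, hTΛ, hTspan, hTli⟩ := exists_linearIndependent ℝ (Λ : Set h)
  have : Finite T := hTli.setFinite
  let pairing : dual →+ (T → ℝ) :=
    (LinearMap.pi fun t : T => B.flip t).toAddMonoidHom.comp dual.subtype
  obtain ⟨f, hf⟩ := pairing.exists_intCast_eq fun μ t => (hdual μ).1 μ.2 t (hTΛ t.2)
  have hperp_le : perp ≤ dual := fun μ hμ =>
    (hdual μ).2 fun l hl => ⟨0, by simpa using (hperp μ).1 hμ l hl⟩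
  refine AddSubgroup.exists_free_compl_of_ker_eq hperp_le f fun μ => ?_
  rw [hperp]
  refine Iff.trans ?_ (Submodule.forall_mem_eq_zero_iff_of_span_eq hTΛ hTspan (B μ))
  simp [funext_iff, ← Int.cast_inj (α := ℝ), hf, pairing]

/-- Let `h` be a finite-dimensional real vector space with a
non-degenerate symmetric bilinear form `B`, let `Λ ⊂ h` be a discrete subgroup
(lattice), let `dual = Λ* = {μ : B μ Λ ⊆ ℤ}` and `perp = Λ⊥ = {μ : B μ Λ = 0}`.
Then there is a finitely generated free abelian subgroup `Γ ⊆ Λ*` with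
`Λ* = Λ⊥ ⊕ Γ` as an internal direct sum of ℤ-modules. -/
theorem stmt2 {h : Type*} [NormedAddCommGroup h] [NormedSpace ℝ h]
    [FiniteDimensional ℝ h]
    (B : h →ₗ[ℝ] h →ₗ[ℝ] ℝ)
    (hsymm : ∀ x y, B x y = B y x)
    (hnondeg : ∀ x, (∀ y, B x y = 0) → x = 0)
    (Λ dual perp : AddSubgroup h) [DiscreteTopology Λ]
    (hdual : ∀ μ, μ ∈ dual ↔ ∀ l ∈ Λ, ∃ n : ℤ, B μ l = (n : ℝ))
    (hperp : ∀ μ, μ ∈ perp ↔ ∀ l ∈ Λ, B μ l = 0) :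
    ∃ Γ : AddSubgroup h, Γ ≤ dual ∧
      (∃ n : ℕ, Nonempty (Γ ≃+ (Fin n → ℤ))) ∧
      perp ⊓ Γ = ⊥ ∧ perp ⊔ Γ = dual :=
  stmt2_general B Λ dual perp hdual hperp
end

section
/- Let G be an abelian group and (F, Ω) an abelian 3-cocycle on G with values in ℂ×, i.e. F : G³ → ℂ× and Ω : G² → ℂ× satisfy the 3-cocycle identity F(g+h,k,l)F(g,h,k+l) = F(g,h,k)F(g,h+k,l)F(h,k,l) and the two hexagon identities F(h,k,g)⁻¹ Ω(g,h+k) F(g,h,k)⁻¹ = Ω(g,k) F(h,g,k)⁻¹ Ω(g,h) and F(k,g,h) Ω(g+h,k) F(g,h,k) = Ω(g,k) F(g,k,h) Ω(h,k). Then the trace q(g) = Ω(g,g) is a quadratic form on G: q(-g) = q(g), and the symmetric function b(g,h) = q(g+h) q(g)⁻¹ q(h)⁻¹ is biadditive in each variable. -/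
/-!
The hexagon identities express `Ω g (h + k)` and `Ω (g + h) k` as `Ω g h * Ω g k` and
`Ω g k * Ω h k` up to factors of `F`. In the monodromy `Ω g h * Ω h g` these factors cancel,
so the monodromy is bimultiplicative. Expanding `Ω (g + h) (g + h)` with both hexagons leaves
`Ω g g * Ω h h * (Ω g h * Ω h g)` times a ratio of four values of `F`, which is trivial by
the 3-cocycle identity at `(g, h, g, h)`. Hence `b` is the monodromy, and `q (-g) = q g`
follows from `q 0 = 1` and `b g (-g) = (b g g)⁻¹ = (q g)⁻²`.
-/

section AbelianCocycle

variable {G M : Type*} [CommGroup M] {F : G → G → G → M} {Ω : G → G → M}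

def IsMulCocycle₃ [Add G] (F : G → G → G → M) : Prop :=
  ∀ g h k l : G, F (g + h) k l * F g h (k + l) = F g h k * F g (h + k) l * F h k l

def HexagonRight [Add G] (F : G → G → G → M) (Ω : G → G → M) : Prop :=
  ∀ g h k : G, (F h k g)⁻¹ * Ω g (h + k) * (F g h k)⁻¹ = Ω g k * (F h g k)⁻¹ * Ω g h

def HexagonLeft [Add G] (F : G → G → G → M) (Ω : G → G → M) : Prop :=
  ∀ g h k : G, F k g h * Ω (g + h) k * F g h k = Ω g k * F g k h * Ω h k

def monodromy (Ω : G → G → M) (g h : G) : M := Ω g h * Ω h g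

theorem monodromy_comm (Ω : G → G → M) (g h : G) : monodromy Ω g h = monodromy Ω h g :=
  mul_comm _ _

theorem monodromy_add_left [Add G] (hR : HexagonRight F Ω) (hL : HexagonLeft F Ω) (a b c : G) :
    monodromy Ω (a + b) c = monodromy Ω a c * monodromy Ω b c := by
  apply Additive.ofMul.injective
  have eR := congrArg Additive.ofMul (hR c a b)
  have eL := congrArg Additive.ofMul (hL a b c)
  simp only [monodromy, ofMul_mul, ofMul_inv] at eR eL ⊢
  linear_combination (norm := abel) eL + eR

theorem monodromy_add_right [Add G] (hR : HexagonRight F Ω) (hL : HexagonLeft F Ω) (a b c : G) :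
    monodromy Ω a (b + c) = monodromy Ω a b * monodromy Ω a c := by
  simp only [monodromy_comm Ω a, monodromy_add_left hR hL]

theorem monodromy_zero_right [AddZeroClass G] (hR : HexagonRight F Ω) (hL : HexagonLeft F Ω)
    (g : G) : monodromy Ω g 0 = 1 := by
  have h := monodromy_add_right hR hL g 0 0
  rwa [add_zero, left_eq_mul] at h

theorem monodromy_neg_right [AddGroup G] (hR : HexagonRight F Ω) (hL : HexagonLeft F Ω)
    (g h : G) : monodromy Ω g (-h) = (monodromy Ω g h)⁻¹ := by
  have e := monodromy_add_right hR hL g h (-h)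
  rw [add_neg_cancel, monodromy_zero_right hR hL] at e
  exact eq_inv_of_mul_eq_one_right e.symm

theorem diag_add [AddCommMagma G]
    (hF : IsMulCocycle₃ F) (hR : HexagonRight F Ω) (hL : HexagonLeft F Ω) (g h : G) :
    Ω (g + h) (g + h) = Ω g g * Ω h h * monodromy Ω g h := by
  apply Additive.ofMul.injective
  have eL := congrArg Additive.ofMul (hL g h (g + h))
  have eRg := congrArg Additive.ofMul (hR g g h)
  have eRh := congrArg Additive.ofMul (hR h g h)
  have eF := congrArg Additive.ofMul (hF g h g h)
  rw [add_comm h g] at eF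
  simp only [monodromy, ofMul_mul, ofMul_inv] at eL eRg eRh eF ⊢
  linear_combination (norm := abel) eL + eRg + eRh - eF

theorem diag_zero [AddCommMonoid G]
    (hF : IsMulCocycle₃ F) (hR : HexagonRight F Ω) (hL : HexagonLeft F Ω) : Ω 0 0 = 1 := by
  have e := diag_add hF hR hL (0 : G) 0
  rwa [add_zero, monodromy_zero_right hR hL, mul_one, left_eq_mul] at e

theorem diag_neg [AddCommGroup G]
    (hF : IsMulCocycle₃ F) (hR : HexagonRight F Ω) (hL : HexagonLeft F Ω) (g : G) :
    Ω (-g) (-g) = Ω g g := by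
  have e := diag_add hF hR hL g (-g)
  rw [add_neg_cancel, diag_zero hF hR hL, monodromy_neg_right hR hL, monodromy] at e
  exact mul_left_cancel (mul_inv_eq_one.mp e.symm)

end AbelianCocycle

theorem stmt8_general {G : Type*} [AddCommGroup G]
    (F : G → G → G → ℂˣ) (Ω : G → G → ℂˣ)
    (hF : ∀ g h k l : G,
      F (g + h) k l * F g h (k + l) = F g h k * F g (h + k) l * F h k l)
    (hhex1 : ∀ g h k : G,
      (F h k g)⁻¹ * Ω g (h + k) * (F g h k)⁻¹ = Ω g k * (F h g k)⁻¹ * Ω g h)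
    (hhex2 : ∀ g h k : G,
      F k g h * Ω (g + h) k * F g h k = Ω g k * F g k h * Ω h k) :
    let q : G → ℂˣ := fun g => Ω g g
    let b : G → G → ℂˣ := fun g h => q (g + h) * (q g)⁻¹ * (q h)⁻¹
    (∀ g, q (-g) = q g) ∧
    (∀ g₁ g₂ h, b (g₁ + g₂) h = b g₁ h * b g₂ h) ∧
    (∀ g h₁ h₂, b g (h₁ + h₂) = b g h₁ * b g h₂) := by
  intro q b
  have hb : ∀ g h, b g h = monodromy Ω g h := fun g h => by
    rw [mul_inv_eq_iff_eq_mul, mul_inv_eq_iff_eq_mul]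
    simp only [q, diag_add hF hhex1 hhex2]
    ac_rfl
  refine ⟨diag_neg hF hhex1 hhex2, fun g₁ g₂ h => ?_, fun g h₁ h₂ => ?_⟩
  · simp only [hb, monodromy_add_left hhex1 hhex2]
  · simp only [hb, monodromy_add_right hhex1 hhex2]

/-- Let `G` be an abelian group and `(F, Ω)` an abelian 3-cocycle on
`G` with values in `ℂˣ` (normalised `F` satisfying the 3-cocycle identity and the two
hexagon identities). Then the trace `q(g) = Ω(g,g)` is a quadratic form on `G`:
`q(-g) = q(g)`, and `b(g,h) = q(g+h) q(g)⁻¹ q(h)⁻¹` is biadditive in each variable. -/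
theorem stmt8 {G : Type*} [AddCommGroup G]
    (F : G → G → G → ℂˣ) (Ω : G → G → ℂˣ)
    (hFnorm : ∀ g h : G, F 0 g h = 1 ∧ F g 0 h = 1 ∧ F g h 0 = 1)
    (hF : ∀ g h k l : G,
      F (g + h) k l * F g h (k + l) = F g h k * F g (h + k) l * F h k l)
    (hhex1 : ∀ g h k : G,
      (F h k g)⁻¹ * Ω g (h + k) * (F g h k)⁻¹ = Ω g k * (F h g k)⁻¹ * Ω g h)
    (hhex2 : ∀ g h k : G,
      F k g h * Ω (g + h) k * F g h k = Ω g k * F g k h * Ω h k) :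
    let q : G → ℂˣ := fun g => Ω g g
    let b : G → G → ℂˣ := fun g h => q (g + h) * (q g)⁻¹ * (q h)⁻¹
    (∀ g, q (-g) = q g) ∧
    (∀ g₁ g₂ h, b (g₁ + g₂) h = b g₁ h * b g₂ h) ∧
    (∀ g h₁ h₂, b g (h₁ + h₂) = b g h₁ * b g h₂) :=
  stmt8_general F Ω hF hhex1 hhex2
end

section
/- Let Λ ⊂ h be an even lattice with dual Λ*, s a section of Λ* → Λ*/Λ with s(Λ)=0, k(μ,ν) = s(μ+ν) - s(μ) - s(ν) ∈ Λ the associated 2-cocycle, and ε : Λ × Λ → ℂ× a normalised 2-cocycle with commutator function (-1)^{⟨α,β⟩}. Define Ω(α,β) = e^{iπ⟨s(α),s(β)⟩} and F(α,β,γ) = (-1)^{⟨s(α), k(β,γ)⟩} · ε(k(α,β), k(α+β,γ)) / ε(k(β,γ), k(α,β+γ)) for α,β,γ ∈ Λ*/Λ. Then (F, Ω) is an abelian 3-cocycle on Λ*/Λ: F satisfies the 3-cocycle identity and (F, Ω) satisfies the two hexagon identities. -/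
/-! Write `F = e(⟨s α, k(β,γ)⟩) · ψ(α,β,γ)` with `e(x) = exp(iπx)` and
`ψ(α,β,γ) = ε(k(α,β), k(α+β,γ)) / ε(k(β,γ), k(α,β+γ))`. Because `k` measures the non-additivity
of `s`, it is a symmetric 2-cocycle, and both factors fail the 3-cocycle identity by the same sign
`(-1)^⟨k(α,β), k(γ,δ)⟩`: the phase by bilinearity, `ψ` by five instances of the cocycle identity
of `ε` and one of its commutator formula. In the hexagons the symmetry of `k` makes the
`ε`-factors cancel, and what remains is bilinearity of `⟨s α, s β⟩` up to `⟨s α, k(β,γ)⟩`; in the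
second hexagon this holds only modulo `2ℤ`, since `⟨k(α,β), s γ⟩ ∈ ℤ` for `γ ∈ Λ*/Λ`. -/

open Complex

namespace LatticeAbelianCocycle

section Defect

variable {A M : Type*}

def addDefect [Add A] [Sub M] (t : A → M) (α β : A) : M := t (α + β) - t α - t β

theorem addDefect_add_addDefect [AddSemigroup A] [AddCommGroup M] (t : A → M) (α β γ : A) :
    addDefect t α β + addDefect t (α + β) γ = addDefect t β γ + addDefect t α (β + γ) := by
  simp only [addDefect, add_assoc]
  abel

theorem addDefect_comm [AddCommMagma A] [AddCommGroup M] (t : A → M) (α β : A) :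
    addDefect t α β = addDefect t β α := by
  simp only [addDefect, add_comm α β]
  abel

theorem addDefect_mem [AddCommGroup M] {L : AddSubgroup M} {t : M ⧸ L → M}
    (ht : ∀ x : M, t (QuotientAddGroup.mk x) - x ∈ L) (α β : M ⧸ L) : addDefect t α β ∈ L := by
  induction α using QuotientAddGroup.induction_on with | H x =>
  induction β using QuotientAddGroup.induction_on with | H y =>
  have key : addDefect t x y = (t ↑(x + y) - (x + y)) - (t x - x) - (t y - y) := by
    rw [addDefect, QuotientAddGroup.mk_add]; abel
  rw [key]
  exact L.sub_mem (L.sub_mem (ht _) (ht x)) (ht y)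

theorem bilin_addDefect_pentagon {R : Type*} [CommRing R] [AddSemigroup A] [AddCommGroup M]
    [Module R M] (B : M →ₗ[R] M →ₗ[R] R) (t : A → M) (α β γ δ : A) :
    B (t (α + β)) (addDefect t γ δ) + B (t α) (addDefect t β (γ + δ)) =
      B (addDefect t α β) (addDefect t γ δ) + B (t α) (addDefect t β γ) +
        B (t α) (addDefect t (β + γ) δ) + B (t β) (addDefect t γ δ) := by
  have h := congrArg (B (t α)) (addDefect_add_addDefect t β γ δ)
  rw [map_add, map_add] at h
  have hp : B (addDefect t α β) = B (t (α + β)) - B (t α) - B (t β) := by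
    simp only [addDefect, map_sub]
  rw [hp, LinearMap.sub_apply, LinearMap.sub_apply]
  linear_combination -h

end Defect

section EpsCochain

variable {A M K : Type*} [Field K]

def epsCochain [Add A] (ε : M → M → K) (k : A → A → M) (α β γ : A) : K :=
  ε (k α β) (k (α + β) γ) / ε (k β γ) (k α (β + γ))

variable {ε : M → M → K}

theorem epsCochain_pentagon [AddSemigroup A] [AddCommGroup M] {k : A → A → M}
    {L : AddSubgroup M} (hne : ∀ a b, ε a b ≠ 0)
    (hε : ∀ a ∈ L, ∀ b ∈ L, ∀ c ∈ L, ε a b * ε (a + b) c = ε b c * ε a (b + c))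
    (hkL : ∀ α β, k α β ∈ L)
    (hk : ∀ α β γ, k α β + k (α + β) γ = k β γ + k α (β + γ)) (α β γ δ : A) :
    epsCochain ε k (α + β) γ δ * epsCochain ε k α β (γ + δ) * ε (k α β) (k γ δ) =
      ε (k γ δ) (k α β) * epsCochain ε k α β γ * epsCochain ε k α (β + γ) δ *
        epsCochain ε k β γ δ := by
  have cocycle {a b c x y : M} (ha : a ∈ L) (hb : b ∈ L) (hc : c ∈ L) (hx : a + b = x)
      (hy : b + c = y) : ε a b * ε x c = ε b c * ε a y := by
    subst hx hy; exact hε a ha b hb c hc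
  have hr : k (α + (β + γ)) δ = k (α + β + γ) δ := by rw [add_assoc]
  have hX₂ : k α (β + γ + δ) = k α (β + (γ + δ)) := by rw [add_assoc]
  simp only [epsCochain, hr, hX₂]
  set p := k α β
  set q := k (α + β) γ
  set r := k (α + β + γ) δ
  set u := k β γ
  set v := k γ δ
  set w := k β (γ + δ)
  set X₁ := k (α + β) (γ + δ)
  set X₂ := k α (β + (γ + δ))
  set X₃ := k α (β + γ)
  set X₄ := k (β + γ) δ
  have h₁ : q + r = v + X₁ := hk (α + β) γ δ
  have h₂ : p + X₁ = w + X₂ := hk α β (γ + δ)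
  have h₃ : p + q = u + X₃ := hk α β γ
  have h₄ : X₃ + r = X₄ + X₂ := by simpa only [hr, hX₂] using hk α (β + γ) δ
  have h₅ : u + X₄ = v + w := hk β γ δ
  have a₁ : ε p q * ε (p + q) r = ε q r * ε p (q + r) :=
    cocycle (hkL _ _) (hkL _ _) (hkL _ _) rfl rfl
  have a₂ : ε p v * ε (p + v) X₁ = ε v X₁ * ε p (q + r) :=
    cocycle (hkL _ _) (hkL _ _) (hkL _ _) rfl h₁.symm
  have a₂' : ε v p * ε (p + v) X₁ = ε p X₁ * ε v (w + X₂) :=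
    cocycle (hkL _ _) (hkL _ _) (hkL _ _) (add_comm v p) h₂
  have a₃ : ε u X₃ * ε (p + q) r = ε X₃ r * ε u (X₄ + X₂) :=
    cocycle (hkL _ _) (hkL _ _) (hkL _ _) h₃.symm h₄
  have a₄ : ε u X₄ * ε (v + w) X₂ = ε X₄ X₂ * ε u (X₄ + X₂) :=
    cocycle (hkL _ _) (hkL _ _) (hkL _ _) h₅ rfl
  have a₅ : ε v w * ε (v + w) X₂ = ε w X₂ * ε v (w + X₂) :=
    cocycle (hkL _ _) (hkL _ _) (hkL _ _) rfl rfl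
  -- After multiplying by `ε (p + q) r * ε (p + v) X₁ * ε (v + w) X₂`, three cocycle identities
  -- turn either side into the same product.
  have key : ε q r * ε p X₁ * ε p v * (ε u X₃ * ε X₄ X₂ * ε v w) =
      ε v p * ε p q * ε X₃ r * ε u X₄ * (ε v X₁ * ε w X₂) := by
    refine mul_right_cancel₀ (b := ε (p + q) r * ε (p + v) X₁ * ε (v + w) X₂)
      (mul_ne_zero (mul_ne_zero (hne _ _) (hne _ _)) (hne _ _)) ?_
    calc _ = ε q r * ε p X₁ * ε X₄ X₂ * (ε u X₃ * ε (p + q) r) * (ε v w * ε (v + w) X₂) *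
            (ε p v * ε (p + v) X₁) := by ring
      _ = ε q r * ε p X₁ * ε X₄ X₂ * (ε X₃ r * ε u (X₄ + X₂)) * (ε w X₂ * ε v (w + X₂)) *
            (ε v X₁ * ε p (q + r)) := by rw [a₃, a₅, a₂]
      _ = ε X₃ r * ε v X₁ * ε w X₂ * (ε v p * ε (p + v) X₁) * (ε p q * ε (p + q) r) *
            (ε u X₄ * ε (v + w) X₂) := by rw [a₂', a₁, a₄]; ring
      _ = _ := by ring
  field_simp [hne]
  linear_combination key

theorem epsCochain_ne_zero [Add A] {k : A → A → M} (hne : ∀ a b, ε a b ≠ 0) (α β γ : A) :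
    epsCochain ε k α β γ ≠ 0 :=
  div_ne_zero (hne _ _) (hne _ _)

theorem epsCochain_hexagon_left [AddCommMagma A] {k : A → A → M}
    (hne : ∀ a b, ε a b ≠ 0) (hk : ∀ α β, k α β = k β α) (α β γ : A) :
    epsCochain ε k β γ α * epsCochain ε k α β γ = epsCochain ε k β α γ := by
  simp only [epsCochain]
  rw [hk (β + γ) α, hk γ α, add_comm γ α, hk β α, add_comm β α]
  field_simp [hne]

theorem epsCochain_hexagon_right [AddCommMagma A] {k : A → A → M}
    (hne : ∀ a b, ε a b ≠ 0) (hk : ∀ α β, k α β = k β α) (α β γ : A) :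
    epsCochain ε k γ α β * epsCochain ε k α β γ = epsCochain ε k α γ β := by
  simp only [epsCochain]
  rw [hk γ (α + β), hk γ α, add_comm γ α, hk γ β, add_comm γ β]
  field_simp [hne]

end EpsCochain

noncomputable def expPiI (x : ℝ) : ℂ := Complex.exp (Real.pi * I * x)

theorem expPiI_add (x y : ℝ) : expPiI (x + y) = expPiI x * expPiI y := by
  simp only [expPiI, ← Complex.exp_add]
  push_cast
  ring_nf

theorem expPiI_intCast (n : ℤ) : expPiI n = (-1) ^ n := by
  rw [expPiI, ← exp_pi_mul_I, ← Complex.exp_int_mul]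
  push_cast
  ring_nf

theorem expPiI_ne_zero (x : ℝ) : expPiI x ≠ 0 := Complex.exp_ne_zero _

theorem expPiI_add_two_mul_intCast (x : ℝ) (n : ℤ) : expPiI (x + 2 * n) = expPiI x := by
  rw [expPiI_add, ← Int.cast_ofNat, ← Int.cast_mul, expPiI_intCast, (even_two_mul n).neg_one_zpow,
    mul_one]

section Associator

variable {A V : Type*} [AddCommGroup V] [Module ℝ V] (B : V →ₗ[ℝ] V →ₗ[ℝ] ℝ)

noncomputable def braiding (t : A → V) (α β : A) : ℂ := expPiI (B (t α) (t β))

noncomputable def associator [Add A] (t : A → V) (ε : V → V → ℂ) (α β γ : A) : ℂ :=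
  expPiI (B (t α) (addDefect t β γ)) * ε (addDefect t α β) (addDefect t (α + β) γ) /
    ε (addDefect t β γ) (addDefect t α (β + γ))

variable {B} {ε : V → V → ℂ}

theorem associator_eq [Add A] (t : A → V) (α β γ : A) :
    associator B t ε α β γ =
      expPiI (B (t α) (addDefect t β γ)) * epsCochain ε (addDefect t) α β γ :=
  mul_div_assoc _ _ _

theorem associator_pentagon [AddSemigroup A] {L : AddSubgroup V} {t : A → V}
    (hint : ∀ a ∈ L, ∀ b ∈ L, ∃ n : ℤ, B a b = n) (hne : ∀ a b, ε a b ≠ 0)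
    (hε : ∀ a ∈ L, ∀ b ∈ L, ∀ c ∈ L, ε a b * ε (a + b) c = ε b c * ε a (b + c))
    (hcomm : ∀ a b, a ∈ L → b ∈ L → ∀ n : ℤ, B a b = n → ε a b = (-1) ^ n * ε b a)
    (htL : ∀ α β, addDefect t α β ∈ L) (α β γ δ : A) :
    associator B t ε (α + β) γ δ * associator B t ε α β (γ + δ) =
      associator B t ε α β γ * associator B t ε α (β + γ) δ * associator B t ε β γ δ := by
  obtain ⟨n, hn⟩ := hint _ (htL α β) _ (htL γ δ)
  have hphase : expPiI (B (t (α + β)) (addDefect t γ δ)) *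
      expPiI (B (t α) (addDefect t β (γ + δ))) =
      (-1) ^ n * (expPiI (B (t α) (addDefect t β γ)) *
        expPiI (B (t α) (addDefect t (β + γ) δ)) * expPiI (B (t β) (addDefect t γ δ))) := by
    rw [← expPiI_intCast, ← expPiI_add, ← expPiI_add, ← expPiI_add, ← expPiI_add,
      bilin_addDefect_pentagon, hn]
    congr 1
    ring
  have hψ := epsCochain_pentagon hne hε htL (addDefect_add_addDefect t) α β γ δ
  rw [hcomm _ _ (htL α β) (htL γ δ) n hn] at hψ
  simp only [associator_eq]
  set ψ₁ := epsCochain ε (addDefect t) (α + β) γ δ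
  set ψ₂ := epsCochain ε (addDefect t) α β (γ + δ)
  set ψ₃ := epsCochain ε (addDefect t) α β γ
  set ψ₄ := epsCochain ε (addDefect t) α (β + γ) δ
  set ψ₅ := epsCochain ε (addDefect t) β γ δ
  have hψ' : ψ₁ * ψ₂ * (-1) ^ n = ψ₃ * ψ₄ * ψ₅ :=
    mul_right_cancel₀ (hne (addDefect t γ δ) (addDefect t α β)) (by linear_combination hψ)
  linear_combination ψ₁ * ψ₂ * hphase +
    expPiI (B (t α) (addDefect t β γ)) * expPiI (B (t α) (addDefect t (β + γ) δ)) *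
      expPiI (B (t β) (addDefect t γ δ)) * hψ'

theorem associator_hexagon_left [AddCommMagma A] (t : A → V) (hne : ∀ a b, ε a b ≠ 0)
    (α β γ : A) :
    (associator B t ε β γ α)⁻¹ * braiding B t α (β + γ) * (associator B t ε α β γ)⁻¹ =
      braiding B t α γ * (associator B t ε β α γ)⁻¹ * braiding B t α β := by
  have hΩ : braiding B t α (β + γ) =
      braiding B t α γ * braiding B t α β * expPiI (B (t α) (addDefect t β γ)) := by
    simp only [braiding, ← expPiI_add, addDefect, map_sub]
    congr 1
    ring
  rw [hΩ, associator_eq, associator_eq, associator_eq, addDefect_comm t γ α,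
    ← epsCochain_hexagon_left hne (addDefect_comm t) α β γ]
  field_simp [expPiI_ne_zero, epsCochain_ne_zero hne]

theorem associator_hexagon_right [AddCommMagma A] {t : A → V} (hsymm : ∀ x y, B x y = B y x)
    (hne : ∀ a b, ε a b ≠ 0) {α β γ : A} (hγ : ∃ n : ℤ, B (t γ) (addDefect t α β) = n) :
    associator B t ε γ α β * braiding B t (α + β) γ * associator B t ε α β γ =
      braiding B t α γ * associator B t ε α γ β * braiding B t β γ := by
  obtain ⟨n, hn⟩ := hγ
  have hphase : expPiI (B (t γ) (addDefect t α β)) * braiding B t (α + β) γ =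
      braiding B t α γ * braiding B t β γ := by
    have hdef : B (t (α + β)) (t γ) =
        B (t α) (t γ) + B (t β) (t γ) + B (t γ) (addDefect t α β) := by
      rw [hsymm (t γ)]
      simp only [addDefect, map_sub, LinearMap.sub_apply]
      ring
    rw [braiding, braiding, braiding, ← expPiI_add, ← expPiI_add,
      ← expPiI_add_two_mul_intCast (B (t α) (t γ) + B (t β) (t γ)) n, hdef, ← hn]
    congr 1
    ring
  rw [associator_eq, associator_eq, associator_eq, addDefect_comm t γ β,
    ← epsCochain_hexagon_right hne (addDefect_comm t) α β γ]
  linear_combination epsCochain ε (addDefect t) γ α β * epsCochain ε (addDefect t) α β γ *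
    expPiI (B (t α) (addDefect t β γ)) * hphase

end Associator

end LatticeAbelianCocycle

open LatticeAbelianCocycle in
theorem stmt9_general {V : Type*} [AddCommGroup V] [Module ℝ V]
    (B : V →ₗ[ℝ] V →ₗ[ℝ] ℝ)
    (hsymm : ∀ x y, B x y = B y x)
    (Λ dual : AddSubgroup V)
    (hdual : ∀ μ, μ ∈ dual ↔ ∀ l ∈ Λ, ∃ n : ℤ, B μ l = (n : ℝ))
    (hΛd : Λ ≤ dual)
    (s : V ⧸ Λ → V)
    (hs : ∀ x : V, s (QuotientAddGroup.mk x) - x ∈ Λ)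
    (ε : V → V → ℂ) (hεne : ∀ a b, ε a b ≠ 0)
    (hεcoc : ∀ a b c, a ∈ Λ → b ∈ Λ → c ∈ Λ →
      ε b c * (ε (a + b) c)⁻¹ * ε a (b + c) * (ε a b)⁻¹ = 1)
    (hεcomm : ∀ a b, a ∈ Λ → b ∈ Λ → ∀ n : ℤ, B a b = (n : ℝ) →
      ε a b = (-1 : ℂ) ^ n * ε b a) :
    let k : V ⧸ Λ → V ⧸ Λ → V := fun α β => s (α + β) - s α - s β
    let Ω : V ⧸ Λ → V ⧸ Λ → ℂ := fun α β =>
      Complex.exp ((Real.pi : ℂ) * Complex.I * (B (s α) (s β) : ℝ))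
    let F : V ⧸ Λ → V ⧸ Λ → V ⧸ Λ → ℂ := fun α β γ =>
      Complex.exp ((Real.pi : ℂ) * Complex.I * (B (s α) (k β γ) : ℝ)) *
        ε (k α β) (k (α + β) γ) / ε (k β γ) (k α (β + γ))
    (∀ α β γ δ : V ⧸ Λ,
      (∃ x ∈ dual, QuotientAddGroup.mk x = α) →
      (∃ x ∈ dual, QuotientAddGroup.mk x = β) →
      (∃ x ∈ dual, QuotientAddGroup.mk x = γ) →
      (∃ x ∈ dual, QuotientAddGroup.mk x = δ) →
      F (α + β) γ δ * F α β (γ + δ) = F α β γ * F α (β + γ) δ * F β γ δ) ∧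
    (∀ α β γ : V ⧸ Λ,
      (∃ x ∈ dual, QuotientAddGroup.mk x = α) →
      (∃ x ∈ dual, QuotientAddGroup.mk x = β) →
      (∃ x ∈ dual, QuotientAddGroup.mk x = γ) →
      (F β γ α)⁻¹ * Ω α (β + γ) * (F α β γ)⁻¹ = Ω α γ * (F β α γ)⁻¹ * Ω α β) ∧
    (∀ α β γ : V ⧸ Λ,
      (∃ x ∈ dual, QuotientAddGroup.mk x = α) →
      (∃ x ∈ dual, QuotientAddGroup.mk x = β) →
      (∃ x ∈ dual, QuotientAddGroup.mk x = γ) →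
      F γ α β * Ω (α + β) γ * F α β γ = Ω α γ * F α γ β * Ω β γ) := by
  intro k Ω F
  have hkΛ : ∀ α β, addDefect s α β ∈ Λ := addDefect_mem hs
  have hint : ∀ a ∈ Λ, ∀ b ∈ Λ, ∃ n : ℤ, B a b = n := fun a ha => (hdual a).1 (hΛd ha)
  have hε : ∀ a ∈ Λ, ∀ b ∈ Λ, ∀ c ∈ Λ, ε a b * ε (a + b) c = ε b c * ε a (b + c) := by
    intro a ha b hb c hc
    have h := hεcoc a b c ha hb hc
    field_simp [hεne] at h
    linear_combination -h
  refine ⟨fun α β γ δ _ _ _ _ => associator_pentagon hint hεne hε hεcomm hkΛ α β γ δ,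
    fun α β γ _ _ _ => associator_hexagon_left s hεne α β γ, ?_⟩
  rintro α β γ - - ⟨z, hz, rfl⟩
  have hsz : s z ∈ dual := by simpa using dual.add_mem (hΛd (hs z)) hz
  exact associator_hexagon_right hsymm hεne ((hdual _).1 hsz _ (hkΛ α β))

/-- Let `Λ` be an even lattice in a real vector space `V` with
symmetric bilinear form `B`, `dual = Λ*`, `s` a section of `V → V ⧸ Λ` with
`s(Λ) = 0`, `k(α,β) = s(α+β) - s(α) - s(β) ∈ Λ` the associated 2-cocycle, and
`ε` a normalised 2-cocycle on `Λ` with commutator function `(-1)^{B(a,b)}`.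
Define `Ω(α,β) = e^{iπ B(s α, s β)}` and
`F(α,β,γ) = e^{iπ B(s α, k(β,γ))} · ε(k(α,β), k(α+β,γ)) / ε(k(β,γ), k(α,β+γ))`.
Then `(F, Ω)` is an abelian 3-cocycle on `Λ*/Λ`: `F` satisfies the 3-cocycle
identity and `(F, Ω)` satisfies the two hexagon identities (on cosets of dual
vectors). -/
theorem stmt9 {V : Type*} [AddCommGroup V] [Module ℝ V]
    (B : V →ₗ[ℝ] V →ₗ[ℝ] ℝ)
    (hsymm : ∀ x y, B x y = B y x)
    (Λ dual : AddSubgroup V)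
    (hdual : ∀ μ, μ ∈ dual ↔ ∀ l ∈ Λ, ∃ n : ℤ, B μ l = (n : ℝ))
    (hΛd : Λ ≤ dual)
    (heven : ∀ a ∈ Λ, ∃ n : ℤ, B a a = 2 * (n : ℝ))
    (s : V ⧸ Λ → V)
    (hs : ∀ x : V, s (QuotientAddGroup.mk x) - x ∈ Λ)
    (hs0 : s 0 = 0)
    (ε : V → V → ℂ) (hεne : ∀ a b, ε a b ≠ 0)
    (hεnorm : ∀ a, ε a 0 = 1 ∧ ε 0 a = 1)
    (hεcoc : ∀ a b c, a ∈ Λ → b ∈ Λ → c ∈ Λ →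
      ε b c * (ε (a + b) c)⁻¹ * ε a (b + c) * (ε a b)⁻¹ = 1)
    (hεcomm : ∀ a b, a ∈ Λ → b ∈ Λ → ∀ n : ℤ, B a b = (n : ℝ) →
      ε a b = (-1 : ℂ) ^ n * ε b a) :
    let k : V ⧸ Λ → V ⧸ Λ → V := fun α β => s (α + β) - s α - s β
    let Ω : V ⧸ Λ → V ⧸ Λ → ℂ := fun α β =>
      Complex.exp ((Real.pi : ℂ) * Complex.I * (B (s α) (s β) : ℝ))
    let F : V ⧸ Λ → V ⧸ Λ → V ⧸ Λ → ℂ := fun α β γ =>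
      Complex.exp ((Real.pi : ℂ) * Complex.I * (B (s α) (k β γ) : ℝ)) *
        ε (k α β) (k (α + β) γ) / ε (k β γ) (k α (β + γ))
    (∀ α β γ δ : V ⧸ Λ,
      (∃ x ∈ dual, QuotientAddGroup.mk x = α) →
      (∃ x ∈ dual, QuotientAddGroup.mk x = β) →
      (∃ x ∈ dual, QuotientAddGroup.mk x = γ) →
      (∃ x ∈ dual, QuotientAddGroup.mk x = δ) →
      F (α + β) γ δ * F α β (γ + δ) = F α β γ * F α (β + γ) δ * F β γ δ) ∧
    (∀ α β γ : V ⧸ Λ,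
      (∃ x ∈ dual, QuotientAddGroup.mk x = α) →
      (∃ x ∈ dual, QuotientAddGroup.mk x = β) →
      (∃ x ∈ dual, QuotientAddGroup.mk x = γ) →
      (F β γ α)⁻¹ * Ω α (β + γ) * (F α β γ)⁻¹ = Ω α γ * (F β α γ)⁻¹ * Ω α β) ∧
    (∀ α β γ : V ⧸ Λ,
      (∃ x ∈ dual, QuotientAddGroup.mk x = α) →
      (∃ x ∈ dual, QuotientAddGroup.mk x = β) →
      (∃ x ∈ dual, QuotientAddGroup.mk x = γ) →
      F γ α β * Ω (α + β) γ * F α β γ = Ω α γ * F α γ β * Ω β γ) :=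
  stmt9_general B hsymm Λ dual hdual hΛd s hs ε hεne hεcoc hεcomm
end

section
/- In the braided monoidal category Vect_G^{(F,Ω)} of G-graded vector spaces with associator scalar F and braiding scalar Ω, fix h ∈ G and let the dualising object be K = ℂ_{2h} with dualising functor D(M)_g = (M_{h·2 - g})* (vector space dual, reflected grading g ↦ 2h - g). Then the assignment θ|_{M_g} = Q(g)·id with Q(g) = Ω(g-h, g-h)/Ω(-h,-h) defines a twist: θ_{1} = id, θ_{M⊗N} = c_{N,M} ∘ c_{M,N} ∘ (θ_M ⊗ θ_N), and D(θ_M) = θ_{D(M)} for all objects M. -/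
/-- In `Vect_G^{(F,Ω)}` with dualising object `K = ℂ_{2h}` and
dualising functor `D(M)_g = (M_{2h-g})*`, the assignment `θ|_{M_g} = Q(g)·id` with
`Q(g) = Ω(g-h, g-h) / Ω(-h,-h)` defines a twist. On the scalar level (to which all
three axioms reduce on simple objects): `θ_1 = id` becomes `Q(0) = 1`, the balancing
`θ_{M⊗N} = c_{N,M} ∘ c_{M,N} ∘ (θ_M ⊗ θ_N)` becomes
`Q(g₁+g₂) = Ω(g₁,g₂) Ω(g₂,g₁) Q(g₁) Q(g₂)`, and the duality compatibility
`D(θ_M) = θ_{D(M)}` becomes `Q(2h - g) = Q(g)`. -/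
theorem stmt11 {G : Type*} [AddCommGroup G]
    (F : G → G → G → ℂˣ) (Ω : G → G → ℂˣ)
    (hFnorm : ∀ g h : G, F 0 g h = 1 ∧ F g 0 h = 1 ∧ F g h 0 = 1)
    (hF : ∀ g h k l : G,
      F (g + h) k l * F g h (k + l) = F g h k * F g (h + k) l * F h k l)
    (hhex1 : ∀ g h k : G,
      (F h k g)⁻¹ * Ω g (h + k) * (F g h k)⁻¹ = Ω g k * (F h g k)⁻¹ * Ω g h)
    (hhex2 : ∀ g h k : G,
      F k g h * Ω (g + h) k * F g h k = Ω g k * F g k h * Ω h k)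
    (h : G) :
    let Q : G → ℂˣ := fun g => Ω (g - h) (g - h) * (Ω (-h) (-h))⁻¹
    Q 0 = 1 ∧
    (∀ g₁ g₂ : G, Q (g₁ + g₂) = Ω g₁ g₂ * Ω g₂ g₁ * Q g₁ * Q g₂) ∧
    (∀ g : G, Q (h + h - g) = Q g) := by
  -- normalization components
  have hF0 : ∀ a b : G, F 0 a b = 1 := fun a b => (hFnorm a b).1
  have hFm : ∀ a b : G, F a 0 b = 1 := fun a b => (hFnorm a b).2.1
  have hFr : ∀ a b : G, F a b 0 = 1 := fun a b => (hFnorm a b).2.2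
  -- inverse-free form of the first hexagon
  have hex1 : ∀ a b c : G,
      Ω a (b + c) * F b a c = F b c a * (F a b c * (Ω a c * Ω a b)) := by
    intro a b c
    have e := congrArg (· * (F b c a * F a b c * F b a c)) (hhex1 a b c)
    simpa [mul_comm, mul_left_comm, mul_assoc] using e
  -- Ω(0, k) = 1
  have w0 : ∀ k : G, Ω 0 k = 1 := by
    intro k
    have e := hhex2 0 0 k
    rw [add_zero, hFr k 0, hF0 0 k, hF0 k 0] at e
    have e2 : Ω 0 k * 1 = Ω 0 k * Ω 0 k := by simpa using e
    exact (mul_left_cancel e2).symm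
  -- Ω(k, 0) = 1
  have w0' : ∀ g : G, Ω g 0 = 1 := by
    intro g
    have e := hex1 g 0 0
    rw [add_zero, hF0 g 0, hF0 0 g, hFm g 0] at e
    have e2 : Ω g 0 * 1 = Ω g 0 * Ω g 0 := by simpa using e
    exact (mul_left_cancel e2).symm
  -- the quadratic property of q(g) = Ω(g,g)
  have wq : ∀ a b : G,
      Ω (a + b) (a + b) = Ω a b * Ω b a * Ω a a * Ω b b := by
    intro a b
    have e1 := hhex2 a b (a + b)
    -- e1 : F (a+b) a b * Ω (a+b) (a+b) * F a b (a+b)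
    --        = Ω a (a+b) * F a (a+b) b * Ω b (a+b)
    have e2 : Ω a (a + b) * F a a b = F a b a * (F a a b * (Ω a b * Ω a a)) :=
      hex1 a a b
    have e3 : Ω b (a + b) * F a b b = F a b b * (F b a b * (Ω b b * Ω b a)) :=
      hex1 b a b
    have p := hF a b a b
    rw [add_comm b a] at p
    -- p : F (a+b) a b * F a b (a+b) = F a b a * F a (a+b) b * F b a b
    have key : (F a b (a + b) * (F a (a + b) b * (F (a + b) a b *
          (Ω a (a + b) * Ω b (a + b))))) * Ω (a + b) (a + b)
        = (F a b (a + b) * (F a (a + b) b * (F (a + b) a b *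
          (Ω a (a + b) * Ω b (a + b))))) *
            (Ω a b * Ω b a * Ω a a * Ω b b) := by
      have comb := congrArg₂ (· * ·)
        (congrArg₂ (· * ·) (congrArg₂ (· * ·) e1 e2) e3) p.symm
      simpa [mul_comm, mul_left_comm, mul_assoc] using comb
    exact mul_left_cancel key
  -- additivity of B(a,c) = Ω a c * Ω c a in the first argument
  have Badd : ∀ a b c : G,
      Ω (a + b) c * Ω c (a + b) = Ω a c * Ω c a * Ω b c * Ω c b := by
    intro a b c
    have e4 := hhex2 a b c
    -- e4 : F c a b * Ω (a+b) c * F a b c = Ω a c * F a c b * Ω b c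
    have e5 : Ω c (a + b) * F a c b = F a b c * (F c a b * (Ω c b * Ω c a)) :=
      hex1 c a b
    have key : (F c a b * (F a b c * F a c b)) * (Ω (a + b) c * Ω c (a + b))
        = (F c a b * (F a b c * F a c b)) *
            (Ω a c * Ω c a * Ω b c * Ω c b) := by
      have comb := congrArg₂ (· * ·) e4 e5
      simpa [mul_comm, mul_left_comm, mul_assoc] using comb
    exact mul_left_cancel key
  -- q(-a) = q(a)
  have wneg : ∀ a : G, Ω (-a) (-a) = Ω a a := by
    intro a
    have hz : a + -a = 0 := by abel
    have e1 := wq a (-a)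
    rw [hz, w0 0] at e1
    have e2 := Badd a (-a) a
    rw [hz, w0 a, w0' a] at e2
    have key : (Ω a (-a) * (Ω (-a) a * Ω a a)) * Ω (-a) (-a)
        = (Ω a (-a) * (Ω (-a) a * Ω a a)) * Ω a a := by
      have comb := congrArg₂ (· * ·) e1.symm e2
      simpa [mul_comm, mul_left_comm, mul_assoc] using comb
    exact mul_left_cancel key
  intro Q
  refine ⟨?_, ?_, ?_⟩
  · show Ω (0 - h) (0 - h) * (Ω (-h) (-h))⁻¹ = 1
    simp [zero_sub]
  · intro a b
    show Ω (a + b - h) (a + b - h) * (Ω (-h) (-h))⁻¹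
        = Ω a b * Ω b a * (Ω (a - h) (a - h) * (Ω (-h) (-h))⁻¹)
          * (Ω (b - h) (b - h) * (Ω (-h) (-h))⁻¹)
    have w1 := wq (a - h) b
    have ha : a - h + b = a + b - h := by abel
    rw [ha] at w1
    have bd := Badd a (-h) b
    have ha2 : a + -h = a - h := (sub_eq_add_neg a h).symm
    rw [ha2] at bd
    have w2 := wq b (-h)
    have hb2 : b + -h = b - h := (sub_eq_add_neg b h).symm
    rw [hb2] at w2
    -- inverse-free version of the goal
    have goalfree : Ω (a + b - h) (a + b - h) * Ω (-h) (-h)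
        = Ω a b * Ω b a * Ω (a - h) (a - h) * Ω (b - h) (b - h) := by
      rw [w1, bd, w2]
      simp [mul_comm, mul_left_comm, mul_assoc]
    have expand : Ω a b * Ω b a * (Ω (a - h) (a - h) * (Ω (-h) (-h))⁻¹)
          * (Ω (b - h) (b - h) * (Ω (-h) (-h))⁻¹)
        = (Ω a b * Ω b a * Ω (a - h) (a - h) * Ω (b - h) (b - h))
            * ((Ω (-h) (-h))⁻¹ * (Ω (-h) (-h))⁻¹) := by
      simp [mul_comm, mul_left_comm, mul_assoc]
    rw [expand, ← goalfree, mul_assoc]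
    congr 1
    group
  · intro g
    show Ω (h + h - g - h) (h + h - g - h) * (Ω (-h) (-h))⁻¹
        = Ω (g - h) (g - h) * (Ω (-h) (-h))⁻¹
    have hg : h + h - g - h = -(g - h) := by abel
    rw [hg, wneg (g - h)]
end

section
/- For every n ∈ ℕ, τ in the upper half plane and v ∈ ℝⁿ, the Gaussian theta identity Σ_{k∈ℤⁿ} e^{πiτ|k+v|²} = (−iτ)^{−n/2} Σ_{m∈ℤⁿ} e^{−πi|m|²/τ} e^{2πi⟨m,v⟩} holds, where |·| is the standard Euclidean norm and the branch of (−iτ)^{−n/2} is the principal one. -/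
open Finset Complex Real

noncomputable section

set_option maxHeartbeats 1000000

private lemma cSummable.mul {ι ι' : Type*} {f : ι → ℂ} {g : ι' → ℂ}
    (hf : Summable f) (hg : Summable g) : Summable (fun x : ι × ι' => f x.1 * g x.2) :=
  summable_mul_of_summable_norm hf.norm hg.norm

private lemma ctsum_mul {ι ι' : Type*} {f : ι → ℂ} {g : ι' → ℂ}
    (hf : Summable f) (hg : Summable g) :
    ((∑' x, f x) * ∑' y, g y) = ∑' z : ι × ι', f z.1 * g z.2 :=
  tsum_mul_tsum_of_summable_norm hf.norm hg.norm

private lemma term_eq (τ : ℂ) (v : ℝ) (k : ℤ) :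
    Complex.exp ((π : ℂ) * I * τ * ((k : ℂ) + (v : ℂ)) ^ 2) =
      Complex.exp ((π : ℂ) * I * τ * (v : ℂ) ^ 2) * jacobiTheta₂_term k (τ * v) τ := by
  rw [jacobiTheta₂_term, ← Complex.exp_add]
  congr 1
  ring

private lemma summable1 {τ : ℂ} (hτ : 0 < τ.im) (v : ℝ) :
    Summable (fun k : ℤ => Complex.exp ((π : ℂ) * I * τ * ((k : ℂ) + (v : ℂ)) ^ 2)) := by
  have := ((summable_jacobiTheta₂_term_iff (τ * v) τ).mpr hτ).mul_left
    (Complex.exp ((π : ℂ) * I * τ * (v : ℂ) ^ 2))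
  exact this.congr fun k => (term_eq τ v k).symm

private lemma summable2 {τ : ℂ} (hτ : 0 < τ.im) (v : ℝ) :
    Summable (fun m : ℤ => Complex.exp (-(π : ℂ) * I * (m : ℂ) ^ 2 / τ) *
      Complex.exp (2 * (π : ℂ) * I * ((m : ℂ) * (v : ℂ)))) := by
  have h0 : τ ≠ 0 := fun h => by simp [h] at hτ
  have hτ' : 0 < (-1 / τ).im := by
    simp only [neg_div, neg_im, one_div, inv_im, neg_neg]
    exact div_pos hτ (Complex.normSq_pos.mpr h0)
  refine ((summable_jacobiTheta₂_term_iff (v : ℂ) (-1 / τ)).mpr hτ').congr fun m => ?_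
  rw [jacobiTheta₂_term, ← Complex.exp_add]
  congr 1
  field_simp
  ring

private lemma onedim {τ : ℂ} (hτ : 0 < τ.im) (v : ℝ) :
    (∑' k : ℤ, Complex.exp ((π : ℂ) * I * τ * ((k : ℂ) + (v : ℂ)) ^ 2)) =
      (-I * τ) ^ (-(1 : ℂ) / 2) * ∑' m : ℤ,
        Complex.exp (-(π : ℂ) * I * (m : ℂ) ^ 2 / τ) *
          Complex.exp (2 * (π : ℂ) * I * ((m : ℂ) * (v : ℂ))) := by
  have h0 : τ ≠ 0 := fun h => by simp [h] at hτ
  have hτ' : 0 < (-1 / τ).im := by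
    simp only [neg_div, neg_im, one_div, inv_im, neg_neg]
    exact div_pos hτ (Complex.normSq_pos.mpr h0)
  calc (∑' k : ℤ, Complex.exp ((π : ℂ) * I * τ * ((k : ℂ) + (v : ℂ)) ^ 2))
      = Complex.exp ((π : ℂ) * I * τ * (v : ℂ) ^ 2) * jacobiTheta₂ (τ * v) τ := by
        rw [tsum_congr (term_eq τ v), tsum_mul_left, jacobiTheta₂]
    _ = Complex.exp ((π : ℂ) * I * τ * (v : ℂ) ^ 2) *
          (1 / (-I * τ) ^ (1 / 2 : ℂ) * Complex.exp (-π * I * (τ * v) ^ 2 / τ) *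
            jacobiTheta₂ ((τ * v) / τ) (-1 / τ)) := by
        rw [jacobiTheta₂_functional_equation]
    _ = (-I * τ) ^ (-(1 : ℂ) / 2) * jacobiTheta₂ ((v : ℂ)) (-1 / τ) := by
        rw [mul_div_cancel_left₀ _ h0, show (-(1:ℂ)/2) = -(1/2 : ℂ) by ring,
          Complex.cpow_neg, ← one_div]
        have hE : Complex.exp ((π : ℂ) * I * τ * (v : ℂ) ^ 2) *
            Complex.exp (-π * I * (τ * v) ^ 2 / τ) = 1 := by
          rw [← Complex.exp_add,
            show (π : ℂ) * I * τ * (v : ℂ) ^ 2 + -π * I * (τ * v) ^ 2 / τ = 0 by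
              field_simp; ring, Complex.exp_zero]
        calc Complex.exp ((π : ℂ) * I * τ * (v : ℂ) ^ 2) *
              (1 / (-I * τ) ^ (1 / 2 : ℂ) * Complex.exp (-π * I * (τ * v) ^ 2 / τ) *
                jacobiTheta₂ ((v : ℂ)) (-1 / τ))
            = (Complex.exp ((π : ℂ) * I * τ * (v : ℂ) ^ 2) *
                Complex.exp (-π * I * (τ * v) ^ 2 / τ)) *
                (1 / (-I * τ) ^ (1 / 2 : ℂ) * jacobiTheta₂ ((v : ℂ)) (-1 / τ)) := by ring
          _ = _ := by rw [hE, one_mul]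
    _ = _ := by
        rw [jacobiTheta₂]
        congr 1
        refine tsum_congr fun m => ?_
        rw [jacobiTheta₂_term, ← Complex.exp_add]
        congr 1
        field_simp
        ring

private lemma keyL (τ : ℂ) {n : ℕ} (v : Fin (n + 1) → ℝ) (p : ℤ × (Fin n → ℤ)) :
    Complex.exp ((π : ℂ) * I * τ *
        ∑ i, (((Fin.cons p.1 p.2 : Fin (n + 1) → ℤ) i : ℂ) + (v i : ℂ)) ^ 2) =
      Complex.exp ((π : ℂ) * I * τ * ((p.1 : ℂ) + (v 0 : ℂ)) ^ 2) *
      Complex.exp ((π : ℂ) * I * τ * ∑ i, ((p.2 i : ℂ) + (v i.succ : ℂ)) ^ 2) := by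
  rw [← Complex.exp_add]
  congr 1
  rw [Fin.sum_univ_succ]
  simp only [Fin.cons_zero, Fin.cons_succ]
  ring

private lemma keyR {τ : ℂ} (h0 : τ ≠ 0) {n : ℕ} (v : Fin (n + 1) → ℝ)
    (p : ℤ × (Fin n → ℤ)) :
    Complex.exp (-(π : ℂ) * I *
        (∑ i, (((Fin.cons p.1 p.2 : Fin (n + 1) → ℤ) i : ℂ)) ^ 2) / τ) *
      Complex.exp (2 * (π : ℂ) * I *
        ∑ i, (((Fin.cons p.1 p.2 : Fin (n + 1) → ℤ) i : ℂ)) * (v i : ℂ)) =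
      (Complex.exp (-(π : ℂ) * I * (p.1 : ℂ) ^ 2 / τ) *
          Complex.exp (2 * (π : ℂ) * I * ((p.1 : ℂ) * (v 0 : ℂ)))) *
      (Complex.exp (-(π : ℂ) * I * (∑ i, (p.2 i : ℂ) ^ 2) / τ) *
          Complex.exp (2 * (π : ℂ) * I * ∑ i, (p.2 i : ℂ) * (v i.succ : ℂ))) := by
  simp only [← Complex.exp_add]
  congr 1
  rw [Fin.sum_univ_succ, Fin.sum_univ_succ]
  simp only [Fin.cons_zero, Fin.cons_succ]
  field_simp
  ring

private lemma summableL {τ : ℂ} (hτ : 0 < τ.im) :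
    ∀ n (v : Fin n → ℝ), Summable (fun k : Fin n → ℤ =>
      Complex.exp ((π : ℂ) * I * τ * ∑ i, ((k i : ℂ) + (v i : ℂ)) ^ 2)) := by
  intro n
  induction n with
  | zero => exact fun v => Summable.of_finite
  | succ n ih =>
      intro v
      rw [← Equiv.summable_iff (Fin.consEquiv (fun _ : Fin (n + 1) => ℤ))]
      have S := cSummable.mul (summable1 hτ (v 0)) (ih (fun i => v i.succ))
      exact S.congr fun p => (keyL τ v p).symm

private lemma summableR {τ : ℂ} (hτ : 0 < τ.im) :
    ∀ n (v : Fin n → ℝ), Summable (fun m : Fin n → ℤ =>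
      Complex.exp (-(π : ℂ) * I * (∑ i, (m i : ℂ) ^ 2) / τ) *
        Complex.exp (2 * (π : ℂ) * I * ∑ i, (m i : ℂ) * (v i : ℂ))) := by
  have h0 : τ ≠ 0 := fun h => by simp [h] at hτ
  intro n
  induction n with
  | zero => exact fun v => Summable.of_finite
  | succ n ih =>
      intro v
      rw [← Equiv.summable_iff (Fin.consEquiv (fun _ : Fin (n + 1) => ℤ))]
      have S := cSummable.mul (summable2 hτ (v 0)) (ih (fun i => v i.succ))
      exact S.congr fun p => (keyR h0 v p).symm

/-- For every `n ∈ ℕ`, `τ` in the upper half plane and `v ∈ ℝⁿ`,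
the Gaussian theta identity
`∑_{k∈ℤⁿ} e^{πiτ|k+v|²} = (-iτ)^{-n/2} ∑_{m∈ℤⁿ} e^{-πi|m|²/τ} e^{2πi⟨m,v⟩}`
holds, with the principal branch of the complex power. -/
theorem stmt18 (n : ℕ) (v : Fin n → ℝ) (τ : ℂ) (hτ : 0 < τ.im) :
    (∑' k : Fin n → ℤ, Complex.exp ((Real.pi : ℂ) * Complex.I * τ *
        ∑ i, ((k i : ℂ) + (v i : ℂ)) ^ 2)) =
      (-Complex.I * τ) ^ (-(n : ℂ) / 2) *
        ∑' m : Fin n → ℤ,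
          Complex.exp (-(Real.pi : ℂ) * Complex.I * (∑ i, (m i : ℂ) ^ 2) / τ) *
            Complex.exp (2 * (Real.pi : ℂ) * Complex.I *
              ∑ i, (m i : ℂ) * (v i : ℂ)) := by
  induction n with
  | zero =>
      have h1 : ∀ f : (Fin 0 → ℤ) → ℂ, ∑' k : Fin 0 → ℤ, f k = f (fun _ => 0) := fun f =>
        tsum_eq_single _ (fun b hb => absurd (Subsingleton.elim b _) hb)
      rw [h1, h1]
      simp
  | succ n ih =>
      have h0 : τ ≠ 0 := fun h => by simp [h] at hτ
      have hIτ : -I * τ ≠ 0 := mul_ne_zero (neg_ne_zero.mpr Complex.I_ne_zero) h0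
      have hL : (∑' k : Fin (n + 1) → ℤ, Complex.exp ((π : ℂ) * I * τ *
            ∑ i, ((k i : ℂ) + (v i : ℂ)) ^ 2)) =
          (∑' a : ℤ, Complex.exp ((π : ℂ) * I * τ * ((a : ℂ) + (v 0 : ℂ)) ^ 2)) *
          (∑' b : Fin n → ℤ, Complex.exp ((π : ℂ) * I * τ *
            ∑ i, ((b i : ℂ) + (v i.succ : ℂ)) ^ 2)) := by
        rw [← Equiv.tsum_eq (Fin.consEquiv (fun _ : Fin (n + 1) => ℤ)),
          ctsum_mul (summable1 hτ (v 0)) (summableL hτ n (fun i => v i.succ))]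
        exact tsum_congr fun p => keyL τ v p
      have hR : (∑' m : Fin (n + 1) → ℤ,
            Complex.exp (-(π : ℂ) * I * (∑ i, (m i : ℂ) ^ 2) / τ) *
              Complex.exp (2 * (π : ℂ) * I * ∑ i, (m i : ℂ) * (v i : ℂ))) =
          (∑' a : ℤ, Complex.exp (-(π : ℂ) * I * (a : ℂ) ^ 2 / τ) *
              Complex.exp (2 * (π : ℂ) * I * ((a : ℂ) * (v 0 : ℂ)))) *
          (∑' b : Fin n → ℤ, Complex.exp (-(π : ℂ) * I * (∑ i, (b i : ℂ) ^ 2) / τ) *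
              Complex.exp (2 * (π : ℂ) * I * ∑ i, (b i : ℂ) * (v i.succ : ℂ))) := by
        rw [← Equiv.tsum_eq (Fin.consEquiv (fun _ : Fin (n + 1) => ℤ)),
          ctsum_mul (summable2 hτ (v 0)) (summableR hτ n (fun i => v i.succ))]
        exact tsum_congr fun p => keyR h0 v p
      rw [hL, hR, onedim hτ (v 0), ih (fun i => v i.succ)]
      rw [show (-(((n : ℕ) + 1 : ℕ) : ℂ)) / 2 = (-(1 : ℂ) / 2) + (-(n : ℂ) / 2) by
        push_cast; ring, Complex.cpow_add _ _ hIτ]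
      ring

end
end
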